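/- If A ⊆ 𝔽₂ⁿ, ε ∈ (0,1], and V ≤ 𝔽₂ⁿ is constructed as V = W + ⟨x₁,…,x_d⟩ where (i) for all nonempty I ⊆ [d], A is ε-uniform on (∑_{i∈I}x_i) + W, and (ii) the densities 𝔼_{∑_{i∈I}x_i + W}1_A for nonempty I all lie in a common interval [j/r₀,(j+1)/r₀), then sup_{r ∉ V^⊥}|(1_A μ_V)^∧(r)| ≤ 2^{-d} + ε + 1/r₀. In particular, choosing 2^d, r₀ ≥ 1/ε gives sup_{r ∉ V^⊥}|(1_A μ_V)^∧(r)| ≤ 3ε. -/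

import Mathlib

/-!
Write `S_I = ∑_{i ∈ I} xᵢ`. Since the `xᵢ` are independent modulo `W`, `(I, w) ↦ S_I + w` is a
bijection `𝒫([d]) × W ≃ V`, so `(1_A μ_V)^∧(r)` is the average over `I` of
`(1_A μ_{S_I + W})^∧(r)`. If `r ∉ W^⊥`, every term with `I ≠ ∅` has size at most `ε` and the term
`I = ∅` size at most `1`. If `r ∈ W^⊥ \ V^⊥`, the term for `I` is `(-1)^{r·S_I}` times the density
of `A` on `S_I + W`; some `r·xᵢ` is nonzero, so `∑_I (-1)^{r·S_I} = ∏ᵢ (1 + (-1)^{r·xᵢ}) = 0`, and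
subtracting the common level `j/r₀` from all densities leaves terms of size at most `1/r₀`, except
again for `I = ∅`. Either way the average is at most `2^{-d} + ε + 1/r₀`.
-/

open scoped Classical
open Finset
noncomputable section

/-- Dot product on `𝔽₂ⁿ`. -/
def dot2 {n : ℕ} (r x : Fin n → ZMod 2) : ZMod 2 := ∑ i, r i * x i

/-- The additive character `t ↦ (-1)^t` of `𝔽₂`. -/
def chi2 (t : ZMod 2) : ℂ := (-1 : ℂ) ^ t.val

/-- `(1_A μ_{x+W})^∧(r) = |W|⁻¹ ∑_{w ∈ W} 1_A(x+w) (-1)^{r·(x+w)}`. -/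
def fcoset2 {n : ℕ} (A : Set (Fin n → ZMod 2)) (x : Fin n → ZMod 2)
    (W : Submodule (ZMod 2) (Fin n → ZMod 2)) (r : Fin n → ZMod 2) : ℂ :=
  (∑ w : W, if x + (w : Fin n → ZMod 2) ∈ A then
      chi2 (dot2 r (x + (w : Fin n → ZMod 2))) else 0) / (Fintype.card W)

/-- The density `𝔼_{x+W} 1_A` of `A` on the coset `x + W`. -/
def dens2 {n : ℕ} (A : Set (Fin n → ZMod 2)) (x : Fin n → ZMod 2)
    (W : Submodule (ZMod 2) (Fin n → ZMod 2)) : ℝ :=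
  (∑ w : W, if x + (w : Fin n → ZMod 2) ∈ A then (1 : ℝ) else 0) / (Fintype.card W)

lemma norm_sum_le_one_add_card_mul {α F : Type*} [Fintype α] [SeminormedAddCommGroup F]
    {f : α → F} (a₀ : α) {δ : ℝ} (hδ : 0 ≤ δ) (h₀ : ‖f a₀‖ ≤ 1) (h : ∀ a ≠ a₀, ‖f a‖ ≤ δ) :
    ‖∑ a, f a‖ ≤ 1 + Fintype.card α * δ := by
  calc ‖∑ a, f a‖ ≤ ∑ a, (δ + if a = a₀ then 1 else 0) := by
        refine norm_sum_le_of_le _ fun a _ => ?_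
        split_ifs with ha
        · subst ha; linarith
        · simpa using h a ha
    _ = 1 + Fintype.card α * δ := by
        rw [sum_add_distrib, sum_ite_eq' univ a₀, sum_const, card_univ, nsmul_eq_mul]
        simp [add_comm]

section SupSpan

variable {K E ι : Type*} [Field K] [AddCommGroup E] [Module K E] [Fintype ι]
  {W : Submodule K E} {x : ι → E}

lemma injective_linearCombination_coprod_subtype
    (hx : LinearIndependent K fun i => Submodule.Quotient.mk (p := W) (x i)) :
    Function.Injective ((Fintype.linearCombination K x).coprod W.subtype) := by
  refine (injective_iff_map_eq_zero _).mpr fun ⟨c, w⟩ h => ?_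
  simp only [LinearMap.coprod_apply, Fintype.linearCombination_apply,
    Submodule.subtype_apply] at h
  have hc : c = 0 := by
    have hmk : ∑ i, c i • Submodule.Quotient.mk (p := W) (x i) = 0 := by
      simpa only [map_add, map_sum, map_smul, map_zero, Submodule.mkQ_apply,
        (Submodule.Quotient.mk_eq_zero W).mpr w.2, add_zero] using congrArg W.mkQ h
    funext i
    exact Fintype.linearIndependent_iff.mp hx c hmk i
  subst hc
  simpa using h

lemma range_linearCombination_coprod_subtype :
    LinearMap.range ((Fintype.linearCombination K x).coprod W.subtype) =
      W ⊔ Submodule.span K (Set.range x) := by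
  rw [LinearMap.range_coprod, Fintype.range_linearCombination, Submodule.range_subtype, sup_comm]

def equivSupSpan (hx : LinearIndependent K fun i => Submodule.Quotient.mk (p := W) (x i)) :
    ((ι → K) × W) ≃ₗ[K] ↥(W ⊔ Submodule.span K (Set.range x)) :=
  (LinearEquiv.ofInjective _ (injective_linearCombination_coprod_subtype hx)).trans
    (LinearEquiv.ofEq _ _ range_linearCombination_coprod_subtype)

lemma coe_equivSupSpan (hx : LinearIndependent K fun i => Submodule.Quotient.mk (p := W) (x i))
    (p : (ι → K) × W) :
    (equivSupSpan hx p : E) = Fintype.linearCombination K x p.1 + p.2 := rfl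

end SupSpan

def finsetEquivZModTwo (ι : Type*) [Fintype ι] : Finset ι ≃ (ι → ZMod 2) where
  toFun I i := if i ∈ I then 1 else 0
  invFun c := {i | c i = 1}
  left_inv I := by ext i; by_cases hi : i ∈ I <;> simp [hi]
  right_inv c := by
    funext i
    simp only [mem_filter_univ]
    generalize c i = a
    fin_cases a
    · exact if_neg zero_ne_one
    · exact if_pos rfl

lemma linearCombination_finsetEquivZModTwo {E ι : Type*} [AddCommGroup E] [Module (ZMod 2) E]
    [Fintype ι] (x : ι → E) (I : Finset ι) :
    Fintype.linearCombination (ZMod 2) x (finsetEquivZModTwo ι I) = ∑ i ∈ I, x i := by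
  simp [finsetEquivZModTwo, Fintype.linearCombination_apply, ite_smul, sum_ite_mem]

section Average

variable {E ι : Type*} [AddCommGroup E] [Module (ZMod 2) E] [Fintype E] [Fintype ι]
  {W : Submodule (ZMod 2) E} {x : ι → E}

lemma sum_sup_span_eq_sum_finset {M : Type*} [AddCommMonoid M]
    (hx : LinearIndependent (ZMod 2) fun i => Submodule.Quotient.mk (p := W) (x i)) (F : E → M) :
    ∑ v : ↥(W ⊔ Submodule.span (ZMod 2) (Set.range x)), F v =
      ∑ I : Finset ι, ∑ w : W, F (∑ i ∈ I, x i + w) := by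
  rw [← (equivSupSpan hx).toEquiv.sum_comp, Fintype.sum_prod_type,
    ← (finsetEquivZModTwo ι).sum_comp]
  simp [coe_equivSupSpan, linearCombination_finsetEquivZModTwo]

lemma card_sup_span
    (hx : LinearIndependent (ZMod 2) fun i => Submodule.Quotient.mk (p := W) (x i)) :
    Fintype.card ↥(W ⊔ Submodule.span (ZMod 2) (Set.range x)) =
      2 ^ Fintype.card ι * Fintype.card W := by
  rw [← Fintype.card_congr (equivSupSpan hx).toEquiv, Fintype.card_prod, Fintype.card_fun,
    ZMod.card]

end Average

lemma chi2_add (a b : ZMod 2) : chi2 (a + b) = chi2 a * chi2 b := by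
  simp only [chi2, ZMod.val_add, ← pow_add]
  exact (neg_one_pow_eq_pow_mod_two _).symm

lemma chi2_sum {ι : Type*} (f : ι → ZMod 2) (I : Finset ι) :
    chi2 (∑ i ∈ I, f i) = ∏ i ∈ I, chi2 (f i) := by
  induction I using Finset.cons_induction with
  | empty => simp [chi2]
  | cons a s ha ih => rw [sum_cons, prod_cons, chi2_add, ih]

lemma chi2_of_ne_zero {t : ZMod 2} (ht : t ≠ 0) : chi2 t = -1 := by
  fin_cases t
  · exact absurd rfl ht
  · simp [chi2, ZMod.val]

lemma norm_chi2 (t : ZMod 2) : ‖chi2 t‖ = 1 := by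
  simp [chi2]

lemma dot2_eq_dotProductEquiv {n : ℕ} (r y : Fin n → ZMod 2) :
    dot2 r y = dotProductEquiv (ZMod 2) (Fin n) r y := rfl

lemma dot2_add {n : ℕ} (r y z : Fin n → ZMod 2) : dot2 r (y + z) = dot2 r y + dot2 r z := by
  simp only [dot2_eq_dotProductEquiv, map_add]

lemma dot2_sum {n : ℕ} {ι : Type*} (r : Fin n → ZMod 2) (x : ι → Fin n → ZMod 2)
    (I : Finset ι) : dot2 r (∑ i ∈ I, x i) = ∑ i ∈ I, dot2 r (x i) := by
  simp only [dot2_eq_dotProductEquiv, map_sum]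

lemma sum_chi2_dot2_sum_eq_zero {n : ℕ} {ι : Type*} [Fintype ι] {r : Fin n → ZMod 2}
    {x : ι → Fin n → ZMod 2} (hx : ∃ i, dot2 r (x i) ≠ 0) :
    ∑ I : Finset ι, chi2 (dot2 r (∑ i ∈ I, x i)) = 0 := by
  obtain ⟨i₀, hi₀⟩ := hx
  calc ∑ I : Finset ι, chi2 (dot2 r (∑ i ∈ I, x i))
      = ∏ i, (1 + chi2 (dot2 r (x i))) := by
        simp only [dot2_sum, chi2_sum, prod_one_add, powerset_univ]
    _ = 0 := prod_eq_zero (mem_univ i₀) (by rw [chi2_of_ne_zero hi₀, add_neg_cancel])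

lemma exists_dot2_ne_zero_of_not_perp {n : ℕ} {ι : Type*} {r : Fin n → ZMod 2}
    {W : Submodule (ZMod 2) (Fin n → ZMod 2)} {x : ι → Fin n → ZMod 2}
    (hW : ∀ w ∈ W, dot2 r w = 0)
    (hV : ∃ v ∈ W ⊔ Submodule.span (ZMod 2) (Set.range x), dot2 r v ≠ 0) :
    ∃ i, dot2 r (x i) ≠ 0 := by
  by_contra! hx
  obtain ⟨v, hv, hrv⟩ := hV
  have hker : W ⊔ Submodule.span (ZMod 2) (Set.range x) ≤
      LinearMap.ker (dotProductEquiv (ZMod 2) (Fin n) r) := by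
    refine sup_le (fun w hw => hW w hw) (Submodule.span_le.mpr ?_)
    rintro _ ⟨i, rfl⟩
    exact hx i
  exact hrv (hker hv)

lemma dens2_nonneg {n : ℕ} (A : Set (Fin n → ZMod 2)) (x : Fin n → ZMod 2)
    (W : Submodule (ZMod 2) (Fin n → ZMod 2)) : 0 ≤ dens2 A x W := by
  unfold dens2
  positivity

lemma dens2_le_one {n : ℕ} (A : Set (Fin n → ZMod 2)) (x : Fin n → ZMod 2)
    (W : Submodule (ZMod 2) (Fin n → ZMod 2)) : dens2 A x W ≤ 1 := by
  rw [dens2, div_le_one (by positivity), sum_boole]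
  exact_mod_cast card_filter_le _ _

lemma norm_fcoset2_le_one {n : ℕ} (A : Set (Fin n → ZMod 2)) (x : Fin n → ZMod 2)
    (W : Submodule (ZMod 2) (Fin n → ZMod 2)) (r : Fin n → ZMod 2) :
    ‖fcoset2 A x W r‖ ≤ 1 := by
  rw [fcoset2, norm_div, Complex.norm_natCast, div_le_one (by positivity)]
  refine (norm_sum_le_of_le _ (n := fun _ => 1) fun w _ => ?_).trans_eq (by simp)
  split_ifs
  · exact (norm_chi2 _).le
  · simp

lemma fcoset2_of_perp {n : ℕ} (A : Set (Fin n → ZMod 2)) (y : Fin n → ZMod 2)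
    {W : Submodule (ZMod 2) (Fin n → ZMod 2)} {r : Fin n → ZMod 2}
    (hW : ∀ w ∈ W, dot2 r w = 0) :
    fcoset2 A y W r = chi2 (dot2 r y) * (dens2 A y W : ℂ) := by
  simp only [fcoset2, dens2, dot2_add, hW _ (SetLike.coe_mem _), add_zero]
  push_cast
  rw [mul_div_assoc', mul_sum]
  congr 1
  refine sum_congr rfl fun w _ => ?_
  split_ifs <;> simp

lemma fcoset2_sup_span_eq_average {n : ℕ} {ι : Type*} [Fintype ι] (A : Set (Fin n → ZMod 2))
    {W : Submodule (ZMod 2) (Fin n → ZMod 2)} {x : ι → Fin n → ZMod 2}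
    (hx : LinearIndependent (ZMod 2) fun i => Submodule.Quotient.mk (p := W) (x i))
    (r : Fin n → ZMod 2) :
    fcoset2 A 0 (W ⊔ Submodule.span (ZMod 2) (Set.range x)) r =
      (∑ I : Finset ι, fcoset2 A (∑ i ∈ I, x i) W r) / 2 ^ Fintype.card ι := by
  simp only [fcoset2, zero_add]
  rw [sum_sup_span_eq_sum_finset hx (fun y => if y ∈ A then chi2 (dot2 r y) else 0),
    card_sup_span hx, ← sum_div, div_div]
  push_cast
  ring

lemma norm_sum_fcoset2_le_of_uniform {n : ℕ} {ι : Type*} [Fintype ι] {A : Set (Fin n → ZMod 2)}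
    {W : Submodule (ZMod 2) (Fin n → ZMod 2)} {x : ι → Fin n → ZMod 2} {r : Fin n → ZMod 2}
    {ε : ℝ} (hε : 0 ≤ ε)
    (hunif : ∀ I : Finset ι, I.Nonempty → ‖fcoset2 A (∑ i ∈ I, x i) W r‖ ≤ ε) :
    ‖∑ I : Finset ι, fcoset2 A (∑ i ∈ I, x i) W r‖ ≤ 1 + 2 ^ Fintype.card ι * ε := by
  refine (norm_sum_le_one_add_card_mul (f := fun I => fcoset2 A (∑ i ∈ I, x i) W r) ∅ hε
    (norm_fcoset2_le_one ..) fun I hI => hunif I (nonempty_iff_ne_empty.mpr hI)).trans_eq ?_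
  simp [Fintype.card_finset]

lemma norm_sum_fcoset2_le_of_perp {n : ℕ} {ι : Type*} [Fintype ι] {A : Set (Fin n → ZMod 2)}
    {W : Submodule (ZMod 2) (Fin n → ZMod 2)} {x : ι → Fin n → ZMod 2} {r : Fin n → ZMod 2}
    (hW : ∀ w ∈ W, dot2 r w = 0) (hx : ∃ i, dot2 r (x i) ≠ 0) {c δ : ℝ} (hc : 0 ≤ c)
    (hdens : ∀ I : Finset ι, I.Nonempty →
      c ≤ dens2 A (∑ i ∈ I, x i) W ∧ dens2 A (∑ i ∈ I, x i) W ≤ c + δ) :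
    ‖∑ I : Finset ι, fcoset2 A (∑ i ∈ I, x i) W r‖ ≤ 1 + 2 ^ Fintype.card ι * δ := by
  obtain ⟨i₀, hi₀⟩ := hx
  obtain ⟨hlo₀, hhi₀⟩ := hdens {i₀} (singleton_nonempty i₀)
  have hc1 : c ≤ 1 := hlo₀.trans (dens2_le_one ..)
  -- the characters sum to zero, so the common density level `c` can be subtracted for free
  have hshift : ∑ I, fcoset2 A (∑ i ∈ I, x i) W r =
      ∑ I, chi2 (dot2 r (∑ i ∈ I, x i)) * ((dens2 A (∑ i ∈ I, x i) W - c : ℝ) : ℂ) := by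
    simp only [fcoset2_of_perp _ _ hW, Complex.ofReal_sub, mul_sub, sum_sub_distrib,
      ← sum_mul, sum_chi2_dot2_sum_eq_zero ⟨i₀, hi₀⟩, zero_mul, sub_zero]
  have hterm : ∀ I : Finset ι,
      ‖chi2 (dot2 r (∑ i ∈ I, x i)) * ((dens2 A (∑ i ∈ I, x i) W - c : ℝ) : ℂ)‖ =
        |dens2 A (∑ i ∈ I, x i) W - c| := by
    intro I
    rw [norm_mul, norm_chi2, one_mul, Complex.norm_real, Real.norm_eq_abs]
  rw [hshift]
  refine (norm_sum_le_one_add_card_mul ∅ (by linarith) ?_ fun I hI => ?_).trans_eq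
    (by simp [Fintype.card_finset])
  · rw [hterm, abs_le]
    constructor <;> linarith [dens2_nonneg A (∑ i ∈ ∅, x i) W, dens2_le_one A (∑ i ∈ ∅, x i) W]
  · obtain ⟨hlo, hhi⟩ := hdens I (nonempty_iff_ne_empty.mpr hI)
    rw [hterm, abs_le]
    constructor <;> linarith

lemma norm_fcoset2_sup_span_le {n : ℕ} {ι : Type*} [Fintype ι] {A : Set (Fin n → ZMod 2)}
    {W : Submodule (ZMod 2) (Fin n → ZMod 2)} {x : ι → Fin n → ZMod 2} {r : Fin n → ZMod 2}
    (hx : LinearIndependent (ZMod 2) fun i => Submodule.Quotient.mk (p := W) (x i)) {δ : ℝ}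
    (h : ‖∑ I : Finset ι, fcoset2 A (∑ i ∈ I, x i) W r‖ ≤ 1 + 2 ^ Fintype.card ι * δ) :
    ‖fcoset2 A 0 (W ⊔ Submodule.span (ZMod 2) (Set.range x)) r‖ ≤
      ((2 : ℝ) ^ Fintype.card ι)⁻¹ + δ := by
  rw [fcoset2_sup_span_eq_average A hx, norm_div, norm_pow, Complex.norm_ofNat,
    div_le_iff₀ (by positivity), add_mul, inv_mul_cancel₀ (by positivity), mul_comm δ]
  exact h

theorem combined_uniformity_bound_general {n d r₀ : ℕ}
    (A : Set (Fin n → ZMod 2)) (W : Submodule (ZMod 2) (Fin n → ZMod 2))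
    (ε : ℝ) (hε0 : 0 < ε)
    (x : Fin d → (Fin n → ZMod 2))
    (hx : LinearIndependent (ZMod 2) fun i => Submodule.Quotient.mk (p := W) (x i))
    (hunif : ∀ I : Finset (Fin d), I.Nonempty →
      ∀ r : Fin n → ZMod 2, (∃ w ∈ W, dot2 r w ≠ 0) →
        ‖fcoset2 A (∑ i ∈ I, x i) W r‖ ≤ ε)
    (j : ℕ)
    (hdens : ∀ I : Finset (Fin d), I.Nonempty →
      (j : ℝ) / r₀ ≤ dens2 A (∑ i ∈ I, x i) W ∧
      dens2 A (∑ i ∈ I, x i) W < ((j : ℝ) + 1) / r₀)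
    (V : Submodule (ZMod 2) (Fin n → ZMod 2))
    (hV : V = W ⊔ Submodule.span (ZMod 2) (Set.range x)) :
    (∀ r : Fin n → ZMod 2, (∃ v ∈ V, dot2 r v ≠ 0) →
      ‖fcoset2 A 0 V r‖ ≤ ((2 : ℝ) ^ d)⁻¹ + ε + 1 / r₀) ∧
    (1 / ε ≤ (2 : ℝ) ^ d → 1 / ε ≤ (r₀ : ℝ) →
      ∀ r : Fin n → ZMod 2, (∃ v ∈ V, dot2 r v ≠ 0) →
        ‖fcoset2 A 0 V r‖ ≤ 3 * ε) := by
  have hbound : ∀ r : Fin n → ZMod 2, (∃ v ∈ V, dot2 r v ≠ 0) →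
      ‖fcoset2 A 0 V r‖ ≤ ((2 : ℝ) ^ d)⁻¹ + ε + 1 / r₀ := by
    intro r hr
    rw [hV] at hr ⊢
    have hr₀ : (0 : ℝ) ≤ 1 / r₀ := by positivity
    by_cases hW : ∃ w ∈ W, dot2 r w ≠ 0
    · have := norm_fcoset2_sup_span_le hx
        (norm_sum_fcoset2_le_of_uniform hε0.le fun I hI => hunif I hI r hW)
      rw [Fintype.card_fin] at this
      linarith
    · push Not at hW
      have := norm_fcoset2_sup_span_le hx (norm_sum_fcoset2_le_of_perp hW
        (exists_dot2_ne_zero_of_not_perp hW hr) (by positivity)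
        fun I hI => ⟨(hdens I hI).1, by rw [← add_div]; exact (hdens I hI).2.le⟩)
      rw [Fintype.card_fin] at this
      linarith
  refine ⟨hbound, fun h2d hr₀ r hr => ?_⟩
  have h2d' : ((2 : ℝ) ^ d)⁻¹ ≤ ε := inv_le_of_inv_le₀ hε0 (by rwa [← one_div])
  have hr₀' : 1 / (r₀ : ℝ) ≤ ε := by
    rw [one_div]; exact inv_le_of_inv_le₀ hε0 (by rwa [← one_div])
  linarith [hbound r hr]

/-- combining the two frequency regimes. If `A` is `ε`-uniform on
every coset `(∑_{i∈I} xᵢ) + W` (`I ≠ ∅`) and the densities of `A` on these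
cosets lie in a common window `[j/r₀, (j+1)/r₀)`, then `V = W + ⟨x₁,…,x_d⟩`
satisfies `sup_{r ∉ V^⊥} |(1_A μ_V)^∧(r)| ≤ 2^{-d} + ε + 1/r₀`; in particular
if `2^d, r₀ ≥ 1/ε` then the sup is at most `3ε`. -/
theorem combined_uniformity_bound {n d r₀ : ℕ} (hd : 1 ≤ d) (hr₀ : 1 ≤ r₀)
    (A : Set (Fin n → ZMod 2)) (W : Submodule (ZMod 2) (Fin n → ZMod 2))
    (ε : ℝ) (hε0 : 0 < ε) (hε1 : ε ≤ 1)
    (x : Fin d → (Fin n → ZMod 2))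
    (hx : LinearIndependent (ZMod 2) fun i => Submodule.Quotient.mk (p := W) (x i))
    (hunif : ∀ I : Finset (Fin d), I.Nonempty →
      ∀ r : Fin n → ZMod 2, (∃ w ∈ W, dot2 r w ≠ 0) →
        ‖fcoset2 A (∑ i ∈ I, x i) W r‖ ≤ ε)
    (j : ℕ)
    (hdens : ∀ I : Finset (Fin d), I.Nonempty →
      (j : ℝ) / r₀ ≤ dens2 A (∑ i ∈ I, x i) W ∧
      dens2 A (∑ i ∈ I, x i) W < ((j : ℝ) + 1) / r₀)
    (V : Submodule (ZMod 2) (Fin n → ZMod 2))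
    (hV : V = W ⊔ Submodule.span (ZMod 2) (Set.range x)) :
    (∀ r : Fin n → ZMod 2, (∃ v ∈ V, dot2 r v ≠ 0) →
      ‖fcoset2 A 0 V r‖ ≤ ((2 : ℝ) ^ d)⁻¹ + ε + 1 / r₀) ∧
    (1 / ε ≤ (2 : ℝ) ^ d → 1 / ε ≤ (r₀ : ℝ) →
      ∀ r : Fin n → ZMod 2, (∃ v ∈ V, dot2 r v ≠ 0) →
        ‖fcoset2 A 0 V r‖ ≤ 3 * ε) :=
  combined_uniformity_bound_general A W ε hε0 x hx hunif j hdens V hV
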